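/- For Model 1 in dimension d = 1 under the Cramér condition: there exists c'' > 0 so that for c₁ sufficiently small and n, l sufficiently large, for any block index k one has P(A(c₁,n,l,k)) ≤ e^{−c''ε(1−δ)n}, where A(c₁,n,l,k) = {∃ J ⊆ {1,2,…,(1−δ)n/l} with |J| ≤ c₁n/l and Σ_{j∈J} Y_{k,j} ≤ −(ε/10)(1−δ)n}. -/

import Mathlib

/-!
Model 1 (directed last passage percolation, d = 1).  Edges are indexed by
`(x, m, b) : ℤ × ℕ × Bool`, representing the directed edge from the vertex
`(x, m)` to `(x + (if b then 1 else -1), m + 1)`.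
-/

open MeasureTheory ProbabilityTheory Filter

namespace Stmt8

/-- Position of a directed path after `k` steps, starting at `x`,
with step signs `s`. -/
def pos (x : ℤ) (s : ℕ → Bool) : ℕ → ℤ
  | 0 => x
  | k + 1 => pos x s k + (if s k then 1 else -1)

/-- Value `V(γ)` of the directed path starting at `(x, m)`, taking `n` steps
according to `s`, in the edge-weight realization `Y`. -/
noncomputable def pathVal (Y : ℤ × ℕ × Bool → ℝ) (x : ℤ) (m : ℕ) (s : ℕ → Bool) (n : ℕ) : ℝ :=
  ∑ k ∈ Finset.range n, Y (pos x s k, m + k, s k)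

/-- The `k`-th spatial block `C_k ⊂ ℤ`: an interval of length `l` inside
`(-δn/4, δn/4)`, the blocks `C_1, C_2, …` being disjoint and consecutive. -/
noncomputable def Cblock (δ : ℝ) (n l k : ℕ) : Set ℤ :=
  Set.Ico (-⌊δ * (n : ℝ) / 4⌋ + ((k : ℤ) - 1) * l) (-⌊δ * (n : ℝ) / 4⌋ + (k : ℤ) * l)

/-- The level of the bottom of block `R_{k,j}`, namely `δn + (j-1)l`. -/
noncomputable def blockLevel (δ : ℝ) (n l j : ℕ) : ℕ := ⌊δ * (n : ℝ)⌋₊ + (j - 1) * l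

/-- `Y_{k,j} = min_{x ∈ Ξ_{δn+(j-1)l}(C_k)} max_{γ ∈ ℵ_{δn+jl}^x(C_k)} V(γ)`:
the minimum over points `x` of `Ξ_{δn+(j-1)l}(C_k)` of the maximal value of a
directed path from `x` to level `δn + jl` confined spatially to `C_k`. -/
noncomputable def Ykj (Y : ℤ × ℕ × Bool → ℝ) (δ : ℝ) (n l k j : ℕ) : ℝ :=
  ⨅ x : {x : ℤ // x ∈ Cblock δ n l k ∧ (x + (blockLevel δ n l j : ℤ)) % 2 = 0},
    ⨆ s : {s : ℕ → Bool // ∀ i ≤ l, pos x.1 s i ∈ Cblock δ n l k},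
      pathVal Y x.1 (blockLevel δ n l j) s.1 l

/-- The event `A(c₁, n, l, k)`: there is a set `J ⊆ {1, …, (1-δ)n/l}` of
cardinality at most `c₁ n / l` with `Σ_{j ∈ J} Y_{k,j} ≤ -(ε/10)(1-δ)n`. -/
def Aevent (X : ℤ × ℕ × Bool → Ω → ℝ) (ε δ c₁ : ℝ) (n l k : ℕ) : Set Ω :=
  {ω | ∃ J : Finset ℕ, J ⊆ Finset.Icc 1 ⌊(1 - δ) * (n : ℝ) / l⌋₊ ∧
    (J.card : ℝ) ≤ c₁ * n / l ∧
    ∑ j ∈ J, Ykj (fun e => X e ω) δ n l k j ≤ -(ε / 10) * ((1 - δ) * n)}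

end Stmt8

open Stmt8


/-!
Each `Y_{k,j}` is at least the value of the zigzag path inside `C_k` started at the minimising
point of `Ξ_{δn+(j-1)l}(C_k)`. Hence, with `a = (ε/10)(1-δ)n`, on the event
`Σ_{j ∈ J} Y_{k,j} ≤ -a` one of the `l^|J|` choices of starting points gives a sum of `|J| l`
weights of distinct edges (the paths for different `j` live at disjoint levels) that is `≤ -a`.
The Chernoff bound at `t = c₀/2` bounds the probability of each by `e^{-ta} M^{|J| l}`, `M` the
moment generating function at `-t`. The union bound over starting points and over the at most
`2^{(1-δ)n/l}` sets `J` costs a factor `e^{(1 + |log M|) c₁ n + (1-δ) n log 2 / l}`, which half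
of `e^{-ta}` absorbs once `c₁` is small and `l` is large.
-/

namespace Stmt8

open Finset

section Paths

def pathEdge (x : ℤ) (m : ℕ) (s : ℕ → Bool) (i : ℕ) : ℤ × ℕ × Bool := (pos x s i, m + i, s i)

lemma exists_sum_pathVal_eq_sum {ι : Type*} [Fintype ι] (x : ι → ℤ) (m : ι → ℕ)
    (s : ι → ℕ → Bool) (l : ℕ)
    (hm : ∀ j j' i i', i < l → i' < l → m j + i = m j' + i' → j = j') :
    ∃ E : Finset (ℤ × ℕ × Bool), E.card = Fintype.card ι * l ∧
      ∀ Y, ∑ j, pathVal Y (x j) (m j) (s j) l = ∑ e ∈ E, Y e := by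
  classical
  have hinj : Set.InjOn (fun p : ι × ℕ => pathEdge (x p.1) (m p.1) (s p.1) p.2)
      ((univ ×ˢ range l : Finset (ι × ℕ)) : Set (ι × ℕ)) := by
    rintro ⟨j, i⟩ hji ⟨j', i'⟩ hji' heq
    simp only [coe_product, coe_univ, coe_range, Set.mem_prod, Set.mem_univ, Set.mem_Iio,
      true_and] at hji hji'
    have hlev : m j + i = m j' + i' := congrArg (fun e => e.2.1) heq
    obtain rfl := hm j j' i i' hji hji' hlev
    simp_all
  refine ⟨(univ ×ˢ range l).image _, by rw [card_image_of_injOn hinj, card_product, card_univ,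
    card_range], fun Y => ?_⟩
  rw [sum_image fun p hp q hq => hinj hp hq, sum_product]
  rfl

lemma pos_congr (x : ℤ) {s s' : ℕ → Bool} {n : ℕ} (h : ∀ i < n, s i = s' i) :
    ∀ i ≤ n, pos x s i = pos x s' i := by
  intro i hi
  induction i with
  | zero => rfl
  | succ i ih => simp only [pos, ih (Nat.le_of_succ_le hi), h i hi]

lemma pathVal_congr (Y : ℤ × ℕ × Bool → ℝ) (x : ℤ) (m : ℕ) {s s' : ℕ → Bool} {n : ℕ}
    (h : ∀ i < n, s i = s' i) : pathVal Y x m s n = pathVal Y x m s' n :=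
  sum_congr rfl fun i hi => by
    rw [mem_range] at hi
    rw [pos_congr x h i hi.le, h i hi]

lemma bddAbove_range_pathVal (Y : ℤ × ℕ × Bool → ℝ) (x : ℤ) (m n : ℕ) (p : (ℕ → Bool) → Prop) :
    BddAbove (Set.range fun s : {s // p s} => pathVal Y x m s.1 n) := by
  refine ((Set.finite_range fun v : Fin n → Bool =>
    pathVal Y x m (fun i => if h : i < n then v ⟨i, h⟩ else false) n).subset ?_).bddAbove
  rintro _ ⟨s, rfl⟩
  exact ⟨fun i => s.1 i, pathVal_congr Y x m fun i hi => by simp [hi]⟩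

/-- The path from `x` oscillating between `x` and `x + 1`, or between `x` and `x - 1`
when `x + 1` reaches `b`. -/
def zigzag (x b : ℤ) (i : ℕ) : Bool := if i % 2 = 0 then decide (x + 1 < b) else !decide (x + 1 < b)

lemma pos_zigzag (x b : ℤ) (i : ℕ) :
    pos x (zigzag x b) i = if i % 2 = 0 then x else if x + 1 < b then x + 1 else x - 1 := by
  induction i with
  | zero => rfl
  | succ i ih =>
    rw [pos, ih, zigzag]
    rcases Nat.mod_two_eq_zero_or_one i with hi | hi <;> by_cases hx : x + 1 < b <;>
      simp [hi, hx, Nat.succ_mod_two_eq_zero_iff]; omega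

lemma pos_zigzag_mem_Ico {a b x : ℤ} (hab : a + 2 ≤ b) (hx : x ∈ Set.Ico a b) (i : ℕ) :
    pos x (zigzag x b) i ∈ Set.Ico a b := by
  rw [pos_zigzag]
  obtain ⟨hax, hxb⟩ := hx
  split_ifs <;> constructor <;> omega

end Paths

section Blocks

noncomputable def blockStart (δ : ℝ) (n l k : ℕ) : ℤ := -⌊δ * (n : ℝ) / 4⌋ + ((k : ℤ) - 1) * l

lemma Cblock_eq_Ico (δ : ℝ) (n l k : ℕ) :
    Cblock δ n l k = Set.Ico (blockStart δ n l k) (blockStart δ n l k + l) := by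
  rw [Cblock, blockStart]; ring_nf

lemma exists_pathVal_zigzag_le_Ykj (Y : ℤ × ℕ × Bool → ℝ) (δ : ℝ) (n k j : ℕ) {l : ℕ}
    (hl : 2 ≤ l) : ∃ x ∈ Finset.Ico (blockStart δ n l k) (blockStart δ n l k + l),
      pathVal Y x (blockLevel δ n l j) (zigzag x (blockStart δ n l k + l)) l ≤
        Ykj Y δ n l k j := by
  set a := blockStart δ n l k
  set L := blockLevel δ n l j
  have : Finite {x : ℤ // x ∈ Cblock δ n l k ∧ (x + (L : ℤ)) % 2 = 0} :=
    ((Set.finite_Ico a (a + l)).subset fun x hx => Cblock_eq_Ico δ n l k ▸ hx.1).to_subtype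
  have : Nonempty {x : ℤ // x ∈ Cblock δ n l k ∧ (x + (L : ℤ)) % 2 = 0} := by
    rw [Cblock_eq_Ico]
    rcases Int.emod_two_eq (a + L) with h | h
    · exact ⟨⟨a, by simp only [Set.mem_Ico]; omega⟩⟩
    · exact ⟨⟨a + 1, by simp only [Set.mem_Ico]; omega⟩⟩
  obtain ⟨⟨x, hxC, _⟩, hx⟩ := exists_eq_ciInf_of_finite (f := fun x :
    {x : ℤ // x ∈ Cblock δ n l k ∧ (x + (L : ℤ)) % 2 = 0} =>
      ⨆ s : {s : ℕ → Bool // ∀ i ≤ l, pos x.1 s i ∈ Cblock δ n l k},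
        pathVal Y x.1 L s.1 l)
  have hxI : x ∈ Set.Ico a (a + l) := Cblock_eq_Ico δ n l k ▸ hxC
  have hconf : ∀ i, pos x (zigzag x (a + l)) i ∈ Cblock δ n l k := by
    rw [Cblock_eq_Ico]; exact pos_zigzag_mem_Ico (by omega) hxI
  refine ⟨x, Finset.mem_Ico.mpr hxI, ?_⟩
  rw [Ykj, ← hx]
  exact le_ciSup (bddAbove_range_pathVal Y x L l _)
    ⟨zigzag x (a + l), fun i _ => hconf i⟩

lemma blockLevel_add_inj {δ : ℝ} {n l j j' i i' : ℕ} (hj : 1 ≤ j) (hj' : 1 ≤ j')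
    (hi : i < l) (hi' : i' < l) (h : blockLevel δ n l j + i = blockLevel δ n l j' + i') :
    j = j' := by
  have h' : i + l * (j - 1) = i' + l * (j' - 1) := by rw [blockLevel, blockLevel] at h; linarith
  have := congrArg (· / l) h'
  simp only [Nat.add_mul_div_left _ _ (by omega : 0 < l), Nat.div_eq_of_lt hi,
    Nat.div_eq_of_lt hi'] at this
  omega

end Blocks

section Chernoff

variable {Ω : Type*} [MeasurableSpace Ω] {P : Measure Ω} [IsProbabilityMeasure P]

lemma measureReal_sum_le_le_exp_mul_mgf_pow {ι : Type*} {X : ι → Ω → ℝ} (hindep : iIndepFun X P)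
    (hmeas : ∀ i, Measurable (X i)) {i₀ : ι} (hident : ∀ i, IdentDistrib (X i) (X i₀) P P)
    {t : ℝ} (ht : 0 ≤ t) (hint : ∀ i, Integrable (fun ω => Real.exp (-t * X i ω)) P)
    (S : Finset ι) (a : ℝ) :
    P.real {ω | ∑ i ∈ S, X i ω ≤ -a} ≤ Real.exp (-(t * a)) * mgf (X i₀) P (-t) ^ S.card := by
  have hsum := measure_le_le_exp_mul_mgf (μ := P) (X := ∑ i ∈ S, X i) (-a) (neg_nonpos.mpr ht)
    (hindep.integrable_exp_mul_sum hmeas fun i _ => hint i)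
  rw [hindep.mgf_sum hmeas, prod_eq_pow_card fun i _ =>
    mgf_congr_of_identDistrib _ _ (hident i) _] at hsum
  simpa using hsum

lemma measureReal_sum_Ykj_le {X : ℤ × ℕ × Bool → Ω → ℝ} (hindep : iIndepFun X P)
    (hmeas : ∀ e, Measurable (X e)) {e₀ : ℤ × ℕ × Bool}
    (hident : ∀ e, IdentDistrib (X e) (X e₀) P P) {t : ℝ} (ht : 0 ≤ t)
    (hint : ∀ e, Integrable (fun ω => Real.exp (-t * X e ω)) P) (δ : ℝ) (n k : ℕ) {l : ℕ}
    (hl : 2 ≤ l) {J : Finset ℕ} (hJ : ∀ j ∈ J, 1 ≤ j) (a : ℝ) :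
    P.real {ω | ∑ j ∈ J, Ykj (fun e => X e ω) δ n l k j ≤ -a} ≤
      (l * mgf (X e₀) P (-t) ^ l) ^ J.card * Real.exp (-(t * a)) := by
  classical
  set b := blockStart δ n l k + l
  set F := Finset.Ico (blockStart δ n l k) b
  have hpaths (q : J → F) : ∃ E : Finset (ℤ × ℕ × Bool), E.card = J.card * l ∧
      ∀ Y, ∑ j : J, pathVal Y (q j) (blockLevel δ n l j) (zigzag (q j) b) l = ∑ e ∈ E, Y e := by
    rw [← Fintype.card_coe J]
    exact exists_sum_pathVal_eq_sum _ _ _ l fun j j' i i' hi hi' h =>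
      Subtype.ext (blockLevel_add_inj (hJ _ j.2) (hJ _ j'.2) hi hi' h)
  choose E hEcard hEsum using hpaths
  have hsub : {ω | ∑ j ∈ J, Ykj (fun e => X e ω) δ n l k j ≤ -a} ⊆
      ⋃ q : J → F, {ω | ∑ e ∈ E q, X e ω ≤ -a} := by
    intro ω hω
    choose x hxF hx using fun j => exists_pathVal_zigzag_le_Ykj (fun e => X e ω) δ n k j hl
    refine Set.mem_iUnion.mpr ⟨fun j => ⟨x j, hxF j⟩, ?_⟩
    rw [Set.mem_ofPred_eq, ← hEsum]
    calc _ ≤ ∑ j : J, Ykj (fun e => X e ω) δ n l k j := sum_le_sum fun j _ => hx j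
      _ = ∑ j ∈ J, Ykj (fun e => X e ω) δ n l k j := sum_coe_sort J _
      _ ≤ -a := hω
  have hF : F.card = l := by simp [F, b]
  calc _ ≤ P.real (⋃ q : J → F, {ω | ∑ e ∈ E q, X e ω ≤ -a}) := measureReal_mono hsub
    _ ≤ ∑ q : J → F, P.real {ω | ∑ e ∈ E q, X e ω ≤ -a} := measureReal_iUnion_fintype_le _
    _ ≤ ∑ _q : J → F, Real.exp (-(t * a)) * mgf (X e₀) P (-t) ^ (J.card * l) :=
      sum_le_sum fun q _ => hEcard q ▸ measureReal_sum_le_le_exp_mul_mgf_pow hindep hmeas hident ht hint _ a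
    _ = _ := by
      rw [sum_const, card_univ, Fintype.card_fun, Fintype.card_coe, Fintype.card_coe, hF,
        nsmul_eq_mul, mul_pow, pow_mul]
      push_cast
      ring

lemma measureReal_Aevent_le {X : ℤ × ℕ × Bool → Ω → ℝ} (hindep : iIndepFun X P)
    (hmeas : ∀ e, Measurable (X e)) {e₀ : ℤ × ℕ × Bool}
    (hident : ∀ e, IdentDistrib (X e) (X e₀) P P) {t : ℝ} (ht : 0 ≤ t)
    (hint : ∀ e, Integrable (fun ω => Real.exp (-t * X e ω)) P) {ε δ c₁ K : ℝ} (n k : ℕ)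
    {l : ℕ} (hl : 2 ≤ l) (hK : 0 ≤ K)
    (hMK : (l : ℝ) * mgf (X e₀) P (-t) ^ l ≤ Real.exp (K * l)) :
    P.real (Aevent X ε δ c₁ n l k) ≤ 2 ^ ⌊(1 - δ) * n / l⌋₊ *
      Real.exp (K * (c₁ * n) - t * (ε / 10 * ((1 - δ) * n))) := by
  classical
  set N := ⌊(1 - δ) * n / l⌋₊
  set a := ε / 10 * ((1 - δ) * n)
  set 𝒮 := (Icc 1 N).powerset.filter fun J => (J.card : ℝ) ≤ c₁ * n / l
  have hsub : Aevent X ε δ c₁ n l k ⊆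
      ⋃ J ∈ 𝒮, {ω | ∑ j ∈ J, Ykj (fun e => X e ω) δ n l k j ≤ -a} := by
    rintro ω ⟨J, hJN, hJc, hJ⟩
    exact Set.mem_biUnion (mem_filter.mpr ⟨mem_powerset.mpr hJN, hJc⟩) (by simpa [a] using hJ)
  have hbound (J) (hJ : J ∈ 𝒮) : P.real {ω | ∑ j ∈ J, Ykj (fun e => X e ω) δ n l k j ≤ -a} ≤
      Real.exp (K * (c₁ * n) - t * a) := by
    obtain ⟨hJN, hJc⟩ := mem_filter.mp hJ
    have hl0 : (0 : ℝ) < l := by exact_mod_cast (by omega : 0 < l)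
    have hJl : (J.card : ℝ) * l ≤ c₁ * n := (le_div_iff₀ hl0).mp hJc
    refine (measureReal_sum_Ykj_le hindep hmeas hident ht hint δ n k hl
      (fun j hj => (mem_Icc.mp (mem_powerset.mp hJN hj)).1) a).trans ?_
    calc _ ≤ Real.exp (K * l) ^ J.card * Real.exp (-(t * a)) := by
          have := mgf_nonneg (X := X e₀) (μ := P) (t := -t)
          gcongr
      _ = Real.exp (K * (J.card * l) - t * a) := by
        rw [← Real.exp_nat_mul, ← Real.exp_add]; ring_nf
      _ ≤ _ := by gcongr
  have h𝒮 : (𝒮.card : ℝ) ≤ 2 ^ N := by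
    exact_mod_cast (card_filter_le _ _).trans (by simp)
  calc _ ≤ P.real (⋃ J ∈ 𝒮, {ω | ∑ j ∈ J, Ykj (fun e => X e ω) δ n l k j ≤ -a}) :=
        measureReal_mono hsub (measure_ne_top _ _)
    _ ≤ ∑ J ∈ 𝒮, P.real {ω | ∑ j ∈ J, Ykj (fun e => X e ω) δ n l k j ≤ -a} :=
        measureReal_biUnion_finset_le _ _
    _ ≤ ∑ _J ∈ 𝒮, Real.exp (K * (c₁ * n) - t * a) := sum_le_sum hbound
    _ ≤ _ := by rw [sum_const, nsmul_eq_mul]; gcongr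

end Chernoff

lemma natCast_mul_pow_le_exp {M : ℝ} (hM : 0 ≤ M) (l : ℕ) :
    (l : ℝ) * M ^ l ≤ Real.exp ((1 + |Real.log M|) * l) := by
  have hM' : M ≤ Real.exp |Real.log M| := by
    rcases hM.eq_or_lt with rfl | hM
    · positivity
    · calc M = Real.exp (Real.log M) := (Real.exp_log hM).symm
        _ ≤ _ := Real.exp_le_exp.mpr (le_abs_self _)
  calc (l : ℝ) * M ^ l ≤ Real.exp l * Real.exp |Real.log M| ^ l := by
        gcongr
        linarith [Real.add_one_le_exp (l : ℝ)]
    _ = _ := by rw [← Real.exp_nat_mul, ← Real.exp_add]; ring_nf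

lemma two_pow_floor_mul_exp_le {m c K t ε : ℝ} {l : ℕ} (hm : 0 ≤ m)
    (hl : 40 * Real.log 2 ≤ t * ε * l) (hc : K * c ≤ t * ε * m / 40) :
    2 ^ ⌊m / l⌋₊ * Real.exp (K * c - t * (ε / 10 * m)) ≤ Real.exp (-(t / 20 * ε * m)) := by
  have hl0 : (0 : ℝ) < l := by
    rcases (Nat.cast_nonneg l : (0 : ℝ) ≤ l).eq_or_lt with h | h
    · rw [← h, mul_zero] at hl; linarith [Real.log_pos one_lt_two]
    · exact h
  have hN : ⌊m / l⌋₊ * Real.log 2 ≤ t * ε * m / 40 :=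
    calc ⌊m / l⌋₊ * Real.log 2 ≤ m / l * Real.log 2 := by
          gcongr; exact Nat.floor_le (by positivity)
      _ = m * (40 * Real.log 2) / (40 * l) := by field_simp
      _ ≤ m * (t * ε * l) / (40 * l) := by gcongr
      _ = t * ε * m / 40 := by field_simp
  rw [← Real.exp_log (by norm_num : (0 : ℝ) < 2), ← Real.exp_nat_mul, ← Real.exp_add]
  gcongr
  linarith

end Stmt8

theorem stmt_8_general
    {Ω : Type} [MeasurableSpace Ω] (P : Measure Ω) [IsProbabilityMeasure P]
    (X : ℤ × ℕ × Bool → Ω → ℝ)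
    (hmeas : ∀ e, Measurable (X e))
    (hindep : iIndepFun X P)
    (hident : ∀ e e', Measure.map (X e) P = Measure.map (X e') P)
    (c₀ : ℝ) (hc₀ : 0 < c₀)
    (hcramer : ∀ e, ∀ c : ℝ, |c| < c₀ → Integrable (fun ω => Real.exp (c * X e ω)) P)
    (ε δ : ℝ) (hε : 0 < ε) (hδ1 : δ < 1) :
    ∃ c'' > (0 : ℝ), ∃ c₁' > (0 : ℝ), ∀ c₁ : ℝ, 0 < c₁ → c₁ ≤ c₁' →
      ∃ n₀ l₀ : ℕ, ∀ n : ℕ, n₀ ≤ n → ∀ l : ℕ, l₀ ≤ l → ∀ k : ℕ,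
        (P (Aevent X ε δ c₁ n l k)).toReal ≤ Real.exp (-(c'' * ε * (1 - δ) * n)) := by
  set t := c₀ / 2 with ht
  set e₀ : ℤ × ℕ × Bool := (0, 0, false)
  set K := 1 + |Real.log (mgf (X e₀) P (-t))|
  have hident' (e) : IdentDistrib (X e) (X e₀) P P :=
    ⟨(hmeas e).aemeasurable, (hmeas e₀).aemeasurable, hident e e₀⟩
  have hint (e) : Integrable (fun ω => Real.exp (-t * X e ω)) P :=
    hcramer e (-t) (by rw [abs_neg, abs_of_pos (by positivity), ht]; linarith)
  have hδ' : 0 < 1 - δ := by linarith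
  refine ⟨c₀ / 40, by positivity, t * ε * (1 - δ) / (40 * K), by positivity,
    fun c₁ _ hc₁ => ⟨0, max 2 ⌈40 * Real.log 2 / (t * ε)⌉₊, fun n _ l hl k => ?_⟩⟩
  have hl' : 40 * Real.log 2 ≤ t * ε * l := by
    rw [← div_le_iff₀' (by positivity)]
    exact (Nat.le_ceil _).trans (by exact_mod_cast le_of_max_le_right hl)
  have hc : K * (c₁ * n) ≤ t * ε * ((1 - δ) * n) / 40 := by
    rw [le_div_iff₀' (by positivity)] at hc₁
    nlinarith [(Nat.cast_nonneg n : (0 : ℝ) ≤ n)]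
  refine (measureReal_Aevent_le hindep hmeas hident' (by positivity) hint n k
    (le_of_max_le_left hl) (by positivity) (natCast_mul_pow_le_exp mgf_nonneg l)).trans ?_
  have h := two_pow_floor_mul_exp_le (by positivity) hl' hc
  rwa [show t / 20 * ε * ((1 - δ) * n) = c₀ / 40 * ε * (1 - δ) * n by rw [ht]; ring] at h

/-- Lemma 2.3.  Under the Cramér condition, with `ε, δ ∈ (0,1)`
fixed, there exists `c'' > 0` such that for `c₁` sufficiently small and `n, l`
sufficiently large, for any block index `k`,
`P(A(c₁,n,l,k)) ≤ e^{-c'' ε (1-δ) n}`. -/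
theorem stmt_8
    {Ω : Type} [MeasurableSpace Ω] (P : Measure Ω) [IsProbabilityMeasure P]
    (X : ℤ × ℕ × Bool → Ω → ℝ)
    (hmeas : ∀ e, Measurable (X e))
    (hindep : iIndepFun X P)
    (hident : ∀ e e', Measure.map (X e) P = Measure.map (X e') P)
    (hmean : ∀ e, ∫ ω, X e ω ∂P = 0)
    (c₀ : ℝ) (hc₀ : 0 < c₀)
    (hcramer : ∀ e, ∀ c : ℝ, |c| < c₀ → Integrable (fun ω => Real.exp (c * X e ω)) P)
    (ε δ : ℝ) (hε : 0 < ε) (hε1 : ε < 1) (hδ : 0 < δ) (hδ1 : δ < 1) :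
    ∃ c'' > (0 : ℝ), ∃ c₁' > (0 : ℝ), ∀ c₁ : ℝ, 0 < c₁ → c₁ ≤ c₁' →
      ∃ n₀ l₀ : ℕ, ∀ n : ℕ, n₀ ≤ n → ∀ l : ℕ, l₀ ≤ l → ∀ k : ℕ,
        (P (Aevent X ε δ c₁ n l k)).toReal ≤ Real.exp (-(c'' * ε * (1 - δ) * n)) :=
  stmt_8_general P X hmeas hindep hident c₀ hc₀ hcramer ε δ hε hδ1
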